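/- arXiv:1906.07240 — 4 statements merged into one kernel-verified Lean document; each statement's English description precedes it below -/
import Mathlib

section
/- Let q be even and α_0, α_1, α_2 ∈ F_q with α_0 α_1 ≠ 0. Then the quartic X^4 + α_2 X^2 + α_1 X + α_0 has exactly one root in F_q if and only if the cubic X^3 + α_2 X + α_1 is irreducible over F_q. -/
/-!
In characteristic two `L x = x ^ 4 + α2 x ^ 2 + α1 x` is additive, and the roots of the quartic
are the solutions of `L x = α0`, a coset of `ker L` when there is one. On a finite field there is
therefore exactly one root iff `L` is injective. Since `L x = x (x ^ 3 + α2 x + α1)` and `α1 ≠ 0`,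
this happens iff the cubic has no root in `F`, i.e. iff it is irreducible.
-/

open Polynomial

theorem Polynomial.irreducible_X_pow_three_add_C_mul_X_add_C_iff {K : Type*} [Field K]
    (a b : K) :
    Irreducible (X ^ 3 + C a * X + C b : K[X]) ↔ ∀ x : K, x ^ 3 + a * x + b ≠ 0 := by
  have hdeg : (X ^ 3 + C a * X + C b : K[X]).natDegree = 3 := by compute_degree!
  have hne : (X ^ 3 + C a * X + C b : K[X]) ≠ 0 := ne_zero_of_natDegree_gt (n := 0) (by omega)
  rw [irreducible_iff_roots_eq_zero_of_degree_le_three (by omega) (by omega),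
    Multiset.eq_zero_iff_forall_notMem]
  simp [mem_roots hne]

theorem AddMonoidHom.existsUnique_eq_iff_injective {G : Type*} [AddGroup G] [Finite G]
    (f : G →+ G) (b : G) : (∃! x, f x = b) ↔ Function.Injective f := by
  refine ⟨fun ⟨x₀, hx₀, huniq⟩ => (injective_iff_map_eq_zero f).mpr fun a ha => ?_,
    fun hinj => ?_⟩
  · have : x₀ + a = x₀ := huniq _ (by simp only [map_add, ha, add_zero, hx₀])
    simpa using this
  · obtain ⟨x₀, hx₀⟩ := Finite.surjective_of_injective hinj b
    exact ⟨x₀, hx₀, fun y hy => hinj (hy.trans hx₀.symm)⟩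

namespace CharTwo

variable {R : Type*} [CommRing R] [CharP R 2]

def quarticAddHom (a b : R) : R →+ R where
  toFun x := x ^ 4 + a * x ^ 2 + b * x
  map_zero' := by ring
  map_add' x y := by
    have h4 : (x + y) ^ 4 = x ^ 4 + y ^ 4 := by
      rw [show (x + y) ^ 4 = ((x + y) ^ 2) ^ 2 by ring, add_sq, add_sq]
      ring
    rw [h4, add_sq]
    ring

theorem quarticAddHom_apply (a b x : R) : quarticAddHom a b x = x ^ 4 + a * x ^ 2 + b * x := rfl

theorem quarticAddHom_eq_mul (a b x : R) :
    quarticAddHom a b x = x * (x ^ 3 + a * x + b) := by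
  rw [quarticAddHom_apply]; ring

theorem quarticAddHom_eq_iff (a b c x : R) :
    quarticAddHom a b x = c ↔ x ^ 4 + a * x ^ 2 + b * x + c = 0 :=
  CharTwo.add_eq_zero.symm

theorem injective_quarticAddHom_iff [NoZeroDivisors R] (a : R) {b : R} (hb : b ≠ 0) :
    Function.Injective (quarticAddHom a b) ↔ ∀ x : R, x ^ 3 + a * x + b ≠ 0 := by
  simp only [injective_iff_map_eq_zero, quarticAddHom_eq_mul, mul_eq_zero]
  refine ⟨fun h x hx => hb ?_, fun h x hx => hx.resolve_right (h x)⟩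
  obtain rfl := h x (Or.inr hx)
  simpa using hx

end CharTwo

open CharTwo in
theorem leonard_williams_quartic (F : Type*) [Field F] [Fintype F]
    (h2 : ringChar F = 2) (α0 α1 α2 : F) (h : α0 * α1 ≠ 0) :
    (∃! x : F, x ^ 4 + α2 * x ^ 2 + α1 * x + α0 = 0) ↔
      Irreducible (X ^ 3 + C α2 * X + C α1 : F[X]) := by
  have : CharP F 2 := ringChar.eq_iff.mp h2
  simp_rw [← quarticAddHom_eq_iff, AddMonoidHom.existsUnique_eq_iff_injective,
    injective_quarticAddHom_iff α2 (right_ne_zero_of_mul h),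
    irreducible_X_pow_three_add_C_mul_X_add_C_iff]
end

section
/- Let q be a power of 2, r a positive integer, and h(X) ∈ F_{q^2}[X]. Then f(X) = X^r h(X^{q-1}) is a permutation polynomial of F_{q^2} if and only if gcd(r, q-1) = 1 and X^r h(X)^{q-1} permutes the set μ_{q+1} = {x ∈ F_{q^2} : x^{q+1} = 1}. -/
/-!
The map `x ↦ x ^ (q - 1)` sends `E^*` onto `μ_{q+1}`, its fibres are the cosets of `μ_{q-1}`,
and `g (x ^ (q - 1)) = f x ^ (q - 1)` for `f = X ^ r h(X ^ (q - 1))`, `g = X ^ r h(X) ^ (q - 1)`.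
So `f` permutes `E` exactly when `g` permutes the fibre labels `μ_{q+1}` and `f` is injective on
each fibre; since `f (ζ x) = ζ ^ r f x` for `ζ ∈ μ_{q-1}`, the latter means that `ζ ↦ ζ ^ r` is
injective on `μ_{q-1}`, i.e. `gcd (r, q - 1) = 1`.
-/

open Polynomial Function

theorem IsCyclic.exists_pow_eq_of_pow_eq_one {G : Type*} [Group G] [Finite G] [IsCyclic G]
    {d m : ℕ} (hdm : d * m = Nat.card G) {u : G} (hu : u ^ m = 1) : ∃ x, x ^ d = u := by
  obtain ⟨g, hg⟩ := IsCyclic.exists_monoid_generator (α := G)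
  obtain ⟨k, rfl⟩ := Submonoid.mem_powers_iff _ _ |>.mp (hg u)
  have hm : 0 < m := Nat.pos_of_mul_pos_left (hdm ▸ Nat.card_pos)
  have hdvd : d * m ∣ k * m := by
    rwa [hdm, ← orderOf_eq_card_of_forall_mem_powers hg, orderOf_dvd_iff_pow_eq_one, pow_mul]
  obtain ⟨j, rfl⟩ := (Nat.mul_dvd_mul_iff_right hm).mp hdvd
  exact ⟨g ^ j, by rw [← pow_mul, mul_comm]⟩

theorem FiniteField.pow_eq_one_iff_exists_pow_eq {F : Type*} [Field F] [Fintype F] {d m : ℕ}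
    (hdm : d * m = Fintype.card F - 1) {u : F} : u ^ m = 1 ↔ ∃ x ≠ 0, x ^ d = u := by
  constructor
  · intro hu
    have hm : m ≠ 0 := right_ne_zero_of_mul (hdm ▸ (Nat.sub_pos_of_lt Fintype.one_lt_card).ne')
    lift u to Fˣ using IsUnit.of_pow_eq_one hu hm
    have hdm' : d * m = Nat.card Fˣ := by rw [hdm, Nat.card_units, Nat.card_eq_fintype_card]
    obtain ⟨x, rfl⟩ := IsCyclic.exists_pow_eq_of_pow_eq_one hdm' (Units.ext (by simpa using hu))
    exact ⟨x, x.ne_zero, by simp⟩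
  · rintro ⟨x, hx, rfl⟩
    rw [← pow_mul, hdm]
    exact FiniteField.pow_card_sub_one_eq_one x hx

theorem pow_mul_eval_pow_pow {R : Type*} [CommRing R] (r d : ℕ) (h : R[X]) (x : R) :
    (x ^ d) ^ r * h.eval (x ^ d) ^ d = (x ^ r * h.eval (x ^ d)) ^ d := by
  ring

theorem eq_of_pow_mul_eval_pow_eq {F : Type*} [Field F] {r d : ℕ} (h : F[X]) (hrd : r.Coprime d)
    {x y : F} (hy : y ≠ 0) (hhy : h.eval (y ^ d) ≠ 0) (hxy_pow : x ^ d = y ^ d)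
    (hxy : x ^ r * h.eval (x ^ d) = y ^ r * h.eval (y ^ d)) : x = y := by
  rw [hxy_pow] at hxy
  have hxy_pow' : x ^ r = y ^ r := mul_right_cancel₀ hhy hxy
  have hζ : x / y = 1 := (pow_eq_one_iff_of_coprime hrd).mp
    ⟨by rw [div_pow, hxy_pow', div_self (pow_ne_zero r hy)],
      by rw [div_pow, hxy_pow, div_self (pow_ne_zero d hy)]⟩
  exact (div_eq_one_iff_eq hy).mp hζ

section FiniteField

variable {F : Type*} [Field F] [Fintype F] {r d m : ℕ} (h : F[X])

theorem coprime_of_injective_pow_mul_eval_pow (hd : d ∣ Fintype.card F - 1)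
    (hf : Injective fun x : F => x ^ r * h.eval (x ^ d)) : r.Coprime d := by
  classical
  by_contra hrd
  obtain ⟨p, hp, hpr, hpd⟩ := Nat.Prime.not_coprime_iff_dvd.mp hrd
  have := Fact.mk hp
  obtain ⟨ζ, hζ⟩ := exists_prime_orderOf_dvd_card (G := Fˣ) p
    (by rw [Fintype.card_units]; exact hpd.trans hd)
  have hζr : (ζ : F) ^ r = 1 := by
    rw [← Units.val_pow_eq_pow_val, orderOf_dvd_iff_pow_eq_one.mp (hζ ▸ hpr), Units.val_one]
  have hζd : (ζ : F) ^ d = 1 := by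
    rw [← Units.val_pow_eq_pow_val, orderOf_dvd_iff_pow_eq_one.mp (hζ ▸ hpd), Units.val_one]
  have hζ1 : (ζ : F) = 1 := hf (by simp only [hζr, hζd, one_pow])
  exact hp.one_lt.ne' (hζ ▸ orderOf_eq_one_iff.mpr (Units.ext hζ1))

theorem bijOn_pow_mul_eval_pow_pow_of_bijective (hdm : d * m = Fintype.card F - 1) (hr : 0 < r)
    (hf : Bijective fun x : F => x ^ r * h.eval (x ^ d)) :
    Set.BijOn (fun x : F => x ^ r * h.eval x ^ d) {x | x ^ m = 1} {x | x ^ m = 1} := by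
  have hf0 : (0 : F) ^ r * h.eval (0 ^ d) = 0 := by rw [zero_pow hr.ne', zero_mul]
  have hne : ∀ x : F, x ≠ 0 → x ^ r * h.eval (x ^ d) ≠ 0 :=
    fun x hx h0 => hx (hf.1 (h0.trans hf0.symm))
  refine ((Set.toFinite _).surjOn_iff_bijOn_of_mapsTo ?_).mp ?_
  · rintro u hu
    obtain ⟨x, hx, rfl⟩ := (FiniteField.pow_eq_one_iff_exists_pow_eq hdm).mp hu
    show ((x ^ d) ^ r * h.eval (x ^ d) ^ d) ^ m = 1
    rw [pow_mul_eval_pow_pow]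
    exact (FiniteField.pow_eq_one_iff_exists_pow_eq hdm).mpr ⟨_, hne x hx, rfl⟩
  · rintro v hv
    obtain ⟨y, hy, rfl⟩ := (FiniteField.pow_eq_one_iff_exists_pow_eq hdm).mp hv
    obtain ⟨x, rfl⟩ := hf.2 y
    have hx : x ≠ 0 := by
      rintro rfl
      exact hy hf0
    exact ⟨x ^ d, (FiniteField.pow_eq_one_iff_exists_pow_eq hdm).mpr ⟨x, hx, rfl⟩,
      pow_mul_eval_pow_pow r d h x⟩

theorem eval_pow_ne_zero_of_mapsTo (hdm : d * m = Fintype.card F - 1)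
    (hg : Set.MapsTo (fun x : F => x ^ r * h.eval x ^ d) {x | x ^ m = 1} {x | x ^ m = 1})
    {x : F} (hx : x ≠ 0) : h.eval (x ^ d) ≠ 0 := by
  have hd : d ≠ 0 := left_ne_zero_of_mul (hdm ▸ (Nat.sub_pos_of_lt Fintype.one_lt_card).ne')
  obtain ⟨z, hz, hzx⟩ := (FiniteField.pow_eq_one_iff_exists_pow_eq hdm).mp
    (hg ((FiniteField.pow_eq_one_iff_exists_pow_eq hdm).mpr ⟨x, hx, rfl⟩))
  refine ne_zero_pow hd (right_ne_zero_of_mul (a := (x ^ d) ^ r) ?_)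
  exact hzx.symm.trans_ne (pow_ne_zero d hz)

theorem injective_pow_mul_eval_pow_of_bijOn (hdm : d * m = Fintype.card F - 1) (hr : 0 < r)
    (hrd : r.Coprime d)
    (hg : Set.BijOn (fun x : F => x ^ r * h.eval x ^ d) {x | x ^ m = 1} {x | x ^ m = 1}) :
    Injective fun x : F => x ^ r * h.eval (x ^ d) := by
  have hf_eq_zero {x : F} : x ^ r * h.eval (x ^ d) = 0 ↔ x = 0 := by
    refine ⟨fun h0 => not_not.mp fun hx => ?_, fun hx => by rw [hx, zero_pow hr.ne', zero_mul]⟩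
    exact mul_ne_zero (pow_ne_zero r hx) (eval_pow_ne_zero_of_mapsTo h hdm hg.mapsTo hx) h0
  intro x y hxy
  simp only at hxy
  rcases eq_or_ne y 0 with rfl | hy
  · exact hf_eq_zero.mp (hxy.trans (hf_eq_zero.mpr rfl))
  have hx : x ≠ 0 := fun hx => hy (hf_eq_zero.mp (hxy.symm.trans (hf_eq_zero.mpr hx)))
  refine eq_of_pow_mul_eval_pow_eq h hrd hy (eval_pow_ne_zero_of_mapsTo h hdm hg.mapsTo hy)
    (hg.injOn ?_ ?_ ?_) hxy
  · exact (FiniteField.pow_eq_one_iff_exists_pow_eq hdm).mpr ⟨x, hx, rfl⟩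
  · exact (FiniteField.pow_eq_one_iff_exists_pow_eq hdm).mpr ⟨y, hy, rfl⟩
  · simp only [pow_mul_eval_pow_pow, hxy]

theorem bijective_pow_mul_eval_pow_iff (hdm : d * m = Fintype.card F - 1) (hr : 0 < r) :
    Bijective (fun x : F => x ^ r * h.eval (x ^ d)) ↔
      r.Coprime d ∧
        Set.BijOn (fun x : F => x ^ r * h.eval x ^ d) {x | x ^ m = 1} {x | x ^ m = 1} :=
  ⟨fun hf => ⟨coprime_of_injective_pow_mul_eval_pow h (Dvd.intro m hdm) hf.1,
      bijOn_pow_mul_eval_pow_pow_of_bijective h hdm hr hf⟩,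
    fun ⟨hrd, hg⟩ =>
      Finite.injective_iff_bijective.mp (injective_pow_mul_eval_pow_of_bijOn h hdm hr hrd hg)⟩

end FiniteField

theorem pp_criterion_mu_general (q : ℕ)
    (E : Type*) [Field E] [Fintype E] (hE : Fintype.card E = q ^ 2)
    (r : ℕ) (hr : 0 < r) (h : Polynomial E) :
    Function.Bijective (fun x : E => x ^ r * h.eval (x ^ (q - 1))) ↔
      (Nat.gcd r (q - 1) = 1 ∧
        Set.BijOn (fun x : E => x ^ r * (h.eval x) ^ (q - 1))
          {x : E | x ^ (q + 1) = 1} {x : E | x ^ (q + 1) = 1}) :=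
  bijective_pow_mul_eval_pow_iff h (by rw [hE, mul_comm, ← Nat.sq_sub_sq, one_pow]) hr

theorem pp_criterion_mu (n : ℕ) (hn : 0 < n) (q : ℕ) (hq : q = 2 ^ n)
    (E : Type*) [Field E] [Fintype E] (hE : Fintype.card E = q ^ 2)
    (r : ℕ) (hr : 0 < r) (h : Polynomial E) :
    Function.Bijective (fun x : E => x ^ r * h.eval (x ^ (q - 1))) ↔
      (Nat.gcd r (q - 1) = 1 ∧
        Set.BijOn (fun x : E => x ^ r * (h.eval x) ^ (q - 1))
          {x : E | x ^ (q + 1) = 1} {x : E | x ^ (q + 1) = 1}) :=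
  pp_criterion_mu_general q E hE r hr h
end

section
/- Over F_2[a, b_1, k], the resultant in a of E_2 = a^5 + a^4 b_1 + a^4 + a^3 + a^2 b_1 + a^2 + k(a b_1^2 + b_1^2) + k^2(a b_1^4 + b_1^5 + b_1^4) and E_3 = a^4 b_1 + a^2 b_1 + a b_1^2 + b_1^2 + k b_1^3 + k^2 b_1^5 equals b_1^{17} k^2. -/
/-- The resultant of two polynomials `p`, `q` (regarded as having degrees `m` and `n`
respectively), defined as the determinant of the `(m+n) × (m+n)` Sylvester matrix. -/
noncomputable def sylResultant {R : Type*} [CommRing R] (m n : ℕ) (p q : Polynomial R) : R :=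
  Matrix.det (Matrix.of fun i j : Fin (m + n) =>
    if (i : ℕ) < n then
      (if (i : ℕ) ≤ (j : ℕ) ∧ (j : ℕ) - (i : ℕ) ≤ m then
        p.coeff (m - ((j : ℕ) - (i : ℕ))) else 0)
    else
      (if (i : ℕ) - n ≤ (j : ℕ) ∧ (j : ℕ) - ((i : ℕ) - n) ≤ n then
        q.coeff (n - ((j : ℕ) - ((i : ℕ) - n))) else 0))

open Polynomial

/-- Abbreviations: work in `F_2[b1, k][a]`, where `b1 = X 0`, `k = X 1`. -/
noncomputable def b1 : MvPolynomial (Fin 2) (ZMod 2) := MvPolynomial.X 0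
noncomputable def k : MvPolynomial (Fin 2) (ZMod 2) := MvPolynomial.X 1

/-- `E_2 = a^5 + a^4 b_1 + a^4 + a^3 + a^2 b_1 + a^2 + k(a b_1^2 + b_1^2)
  + k^2(a b_1^4 + b_1^5 + b_1^4)` as a polynomial in `a`. -/
noncomputable def E2 : Polynomial (MvPolynomial (Fin 2) (ZMod 2)) :=
  Polynomial.X ^ 5 + Polynomial.C b1 * Polynomial.X ^ 4 + Polynomial.X ^ 4 + Polynomial.X ^ 3 + Polynomial.C b1 * Polynomial.X ^ 2 + Polynomial.X ^ 2 +
    Polynomial.C (k * b1 ^ 2) * Polynomial.X + Polynomial.C (k * b1 ^ 2) + Polynomial.C (k ^ 2 * b1 ^ 4) * Polynomial.X +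
    Polynomial.C (k ^ 2 * (b1 ^ 5 + b1 ^ 4))

/-- `E_3 = a^4 b_1 + a^2 b_1 + a b_1^2 + b_1^2 + k b_1^3 + k^2 b_1^5`. -/
noncomputable def E3 : Polynomial (MvPolynomial (Fin 2) (ZMod 2)) :=
  Polynomial.C b1 * Polynomial.X ^ 4 + Polynomial.C b1 * Polynomial.X ^ 2 + Polynomial.C (b1 ^ 2) * Polynomial.X + Polynomial.C (b1 ^ 2) + Polynomial.C (k * b1 ^ 3) +
    Polynomial.C (k ^ 2 * b1 ^ 5)

/-!
Run the Euclidean algorithm on `E2`, `E3` over `F_2[b1, k]`, keeping track of the factors that the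
resultant picks up. `E3 = b1 * E3Monic` with `E3Monic` monic of degree 4; modulo `E3Monic`,
`E2 ≡ b1 * rem₁` with `rem₁` monic quadratic; modulo `rem₁`, `E3Monic ≡ b1 ^ 3 * rem₂` with
`rem₂ = a + (1 + k b1)` linear; and `rem₁ (1 + k b1) = k ^ 2 b1 ^ 2`. The scalar factors contribute
`b1 ^ 5`, `b1 ^ 4` and `(b1 ^ 3) ^ 2`, for a total of `b1 ^ 17 k ^ 2`.
-/

/-- `sylResultant` lists the coefficients along rows in decreasing degree; Mathlib's `sylvester`
matrix is its transpose with the order of both rows and columns reversed. -/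
theorem sylResultant_eq_resultant {R : Type*} [CommRing R] (m n : ℕ) (p q : R[X]) :
    sylResultant m n p q = p.resultant q m n := by
  rw [resultant, ← Matrix.det_transpose,
    ← Matrix.det_submatrix_equiv_self Fin.revPerm (sylvester p q m n).transpose, sylResultant]
  congr 1
  ext i j
  obtain ⟨i, rfl⟩ := Fin.rev_surjective i
  induction i using Fin.addCases <;>
  simp only [sylvester, Matrix.submatrix_apply, Matrix.transpose_apply, Matrix.of_apply,
    Fin.revPerm_apply, Fin.rev_rev, Fin.addCases_left, Fin.addCases_right, Fin.val_rev,
    Fin.val_castAdd, Fin.val_natAdd, Set.mem_Icc] <;>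
  split_ifs <;> first | rfl | omega | (congr 1; omega)

noncomputable def E3Monic : (MvPolynomial (Fin 2) (ZMod 2))[X] :=
  X ^ 4 + X ^ 2 + C b1 * X + C (b1 * (1 + k * b1 + k ^ 2 * b1 ^ 3))

noncomputable def rem₁ : (MvPolynomial (Fin 2) (ZMod 2))[X] :=
  X ^ 2 + C b1 * X + C (1 + b1 + k * b1 ^ 2)

noncomputable def rem₂ : (MvPolynomial (Fin 2) (ZMod 2))[X] :=
  X + C (1 + k * b1)

theorem E3_eq_C_mul_E3Monic : E3 = C b1 * E3Monic := by
  simp only [E3, E3Monic, map_add, map_mul, map_pow, map_one]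
  ring

theorem E2_eq_C_mul_rem₁_add : E2 = C b1 * rem₁ + E3Monic * (X + C (1 + b1)) := by
  simp only [E2, E3Monic, rem₁, map_add, map_mul, map_pow, map_one]
  -- true only in characteristic 2, which `grind`'s ring normalizer takes into account
  grind

theorem E3Monic_eq_C_mul_rem₂_add :
    E3Monic = C (b1 ^ 3) * rem₂ + rem₁ * (X ^ 2 + C b1 * X + C (b1 + b1 ^ 2 + k * b1 ^ 2)) := by
  simp only [E3Monic, rem₁, rem₂, map_add, map_mul, map_pow, map_one]
  grind

theorem natDegree_E3Monic_le : E3Monic.natDegree ≤ 4 := by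
  unfold E3Monic; compute_degree

theorem coeff_E3Monic_four : E3Monic.coeff 4 = 1 := by
  unfold E3Monic; compute_degree!

theorem natDegree_rem₁_le : rem₁.natDegree ≤ 2 := by
  unfold rem₁; compute_degree

theorem coeff_rem₁_two : rem₁.coeff 2 = 1 := by
  unfold rem₁; compute_degree!

theorem eval_rem₁ : rem₁.eval (-(1 + k * b1)) = k ^ 2 * b1 ^ 2 := by
  simp only [rem₁, eval_add, eval_pow, eval_X, eval_mul, eval_C]
  grind

theorem resultant_E2_E3_eq : resultant E2 E3 5 4 = b1 ^ 9 * resultant rem₁ E3Monic 2 4 := by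
  rw [E3_eq_C_mul_E3Monic, resultant_C_mul_right, E2_eq_C_mul_rem₁_add,
    resultant_add_mul_left _ _ _ 5 4 (Nat.add_le_add_right (by compute_degree) 4)
      natDegree_E3Monic_le,
    resultant_C_mul_left,
    (resultant_add_left_deg _ _ 2 4 3 natDegree_rem₁_le : resultant rem₁ E3Monic 5 4 = _),
    coeff_E3Monic_four]
  ring

theorem resultant_rem₁_E3Monic :
    resultant rem₁ E3Monic 2 4 = b1 ^ 6 * resultant rem₁ rem₂ 2 1 := by
  rw [E3Monic_eq_C_mul_rem₂_add,
    resultant_add_mul_right _ _ _ 2 4 (Nat.add_le_add_right (by compute_degree) 2)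
      natDegree_rem₁_le,
    resultant_C_mul_right,
    (resultant_add_right_deg _ _ 2 1 3 (by unfold rem₂; compute_degree) :
      resultant rem₁ rem₂ 2 4 = _),
    coeff_rem₁_two]
  ring

theorem resultant_rem₁_rem₂ : resultant rem₁ rem₂ 2 1 = k ^ 2 * b1 ^ 2 := by
  rw [rem₂, resultant_X_add_C_right _ _ _ natDegree_rem₁_le, eval_rem₁]
  ring

theorem resultant_E2_E3 : sylResultant 5 4 E2 E3 = b1 ^ 17 * k ^ 2 := by
  rw [sylResultant_eq_resultant, resultant_E2_E3_eq, resultant_rem₁_E3Monic, resultant_rem₁_rem₂]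
  ring
end

section
/- Let q be even, a ∈ F_q^*, b = a ∈ F_q^*, and k ∈ F_q with Tr_{q/2}(k) = 1. For y ∈ F_q, the equation x^4 + a^2 x^2 + a^2 x + (k + ak + k^2 + y)^2 = 0 has a unique solution x ∈ F_q for every y ∈ F_q if and only if X^3 + X + 1/a has no root in F_q. -/
/-!
In characteristic 2 the quartic `L(x) = x⁴ + a²x² + a²x` is additive, and `y ↦ (c + y)²` runs
over all of `F`, so the equations have unique solutions for every `y` exactly when `L` is a
bijection of the finite field `F`, i.e. when its kernel is trivial. Since `L(x) = x (x³ + a²x + a²)`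
and `a ≠ 0`, this means that `X³ + a²X + a²` has no root, and the substitution `X = aY` turns
that cubic into `a³ (Y³ + Y + 1/a)`.
-/

open Function

namespace CharTwo

variable {R : Type*} [CommRing R] [CharP R 2]

theorem add_pow_four (x y : R) : (x + y) ^ 4 = x ^ 4 + y ^ 4 :=
  add_pow_char_pow (R := R) x y (p := 2) (n := 2)

variable (R) in
def linearizedQuartic (b c : R) : R →+ R :=
  AddMonoidHom.mk' (fun x => x ^ 4 + b * x ^ 2 + c * x) fun x y => by
    rw [add_pow_four, add_sq]
    ring

theorem linearizedQuartic_apply (b c x : R) :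
    linearizedQuartic R b c x = x ^ 4 + b * x ^ 2 + c * x :=
  rfl

theorem injective_linearizedQuartic_iff [IsDomain R] {b c : R} (hc : c ≠ 0) :
    Injective (linearizedQuartic R b c) ↔ ∀ x : R, x ^ 3 + b * x + c ≠ 0 := by
  have factor : ∀ x : R, linearizedQuartic R b c x = x * (x ^ 3 + b * x + c) := fun x => by
    rw [linearizedQuartic_apply]
    ring
  rw [injective_iff_map_eq_zero]
  refine ⟨fun h x hx => ?_, fun h x hx => ?_⟩
  · have hx0 : x = 0 := h x (by rw [factor, hx, mul_zero])
    exact hc (by simpa [hx0] using hx)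
  · rw [factor] at hx
    exact (mul_eq_zero.mp hx).resolve_right (h x)

theorem forall_existsUnique_add_sq_eq_zero_iff [Finite R] [IsDomain R] (g : R → R) (d : R) :
    (∀ y : R, ∃! x : R, g x + (d + y) ^ 2 = 0) ↔ Bijective g := by
  have hsurj : Surjective fun y : R => (d + y) ^ 2 :=
    (Finite.injective_iff_surjective.mp sq_injective).comp (add_left_surjective d)
  simp only [CharTwo.add_eq_zero]
  exact (hsurj.forall (p := fun c => ∃! x, g x = c)).symm.trans (bijective_iff_existsUnique g).symm

end CharTwo

theorem forall_cubic_ne_zero_iff_scaled {K : Type*} [Field K] {a : K} (ha : a ≠ 0) :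
    (∀ x : K, x ^ 3 + a ^ 2 * x + a ^ 2 ≠ 0) ↔ ∀ x : K, x ^ 3 + x + 1 / a ≠ 0 := by
  have scale : ∀ x : K, (a * x) ^ 3 + a ^ 2 * (a * x) + a ^ 2 = a ^ 3 * (x ^ 3 + x + 1 / a) :=
    fun x => by field_simp
  rw [(mul_left_surjective₀ ha).forall]
  simp only [scale, ne_eq, mul_eq_zero, pow_eq_zero_iff three_ne_zero, ha, false_or]

theorem unique_root_quartic_iff_no_root_cubic_general (F : Type*) [Field F] [Fintype F]
    (h2 : ringChar F = 2)
    (a : F) (ha : a ≠ 0) (k : F) :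
    (∀ y : F, ∃! x : F,
        x ^ 4 + a ^ 2 * x ^ 2 + a ^ 2 * x + (k + a * k + k ^ 2 + y) ^ 2 = 0) ↔
      ∀ x : F, x ^ 3 + x + 1 / a ≠ 0 := by
  have := ringChar.of_eq h2
  calc _ ↔ Bijective (CharTwo.linearizedQuartic F (a ^ 2) (a ^ 2)) :=
        CharTwo.forall_existsUnique_add_sq_eq_zero_iff _ _
    _ ↔ Injective (CharTwo.linearizedQuartic F (a ^ 2) (a ^ 2)) :=
        Finite.injective_iff_bijective.symm
    _ ↔ ∀ x : F, x ^ 3 + a ^ 2 * x + a ^ 2 ≠ 0 :=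
        CharTwo.injective_linearizedQuartic_iff (pow_ne_zero 2 ha)
    _ ↔ _ := forall_cubic_ne_zero_iff_scaled ha

theorem unique_root_quartic_iff_no_root_cubic (F : Type*) [Field F] [Fintype F]
    [Algebra (ZMod 2) F] (h2 : ringChar F = 2)
    (a : F) (ha : a ≠ 0) (k : F) (hk : Algebra.trace (ZMod 2) F k = 1) :
    (∀ y : F, ∃! x : F,
        x ^ 4 + a ^ 2 * x ^ 2 + a ^ 2 * x + (k + a * k + k ^ 2 + y) ^ 2 = 0) ↔
      ∀ x : F, x ^ 3 + x + 1 / a ≠ 0 :=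
  unique_root_quartic_iff_no_root_cubic_general F h2 a ha k
end
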